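/- For all integers n, m ≥ 1, the number of digitally convex sets of the Cartesian product of the complete graphs K_n and K_m equals 2 + (2^n − 2)(2^m − 2), i.e., n_D(K_n □ K_m) = 2 + (2^n − 2)(2^m − 2). -/

import Mathlib

open SimpleGraph

/-- `N[S]`: the union of closed neighbourhoods of the vertices of `S`. -/
def closedNbhd {V : Type*} (G : SimpleGraph V) (S : Set V) : Set V :=
  ⋃ v ∈ S, insert v (G.neighborSet v)

/-- A set `S` is digitally convex in `G` if every vertex `v` with `N[v] ⊆ N[S]`
belongs to `S`. -/
def DigConvex {V : Type*} (G : SimpleGraph V) (S : Set V) : Prop :=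
  ∀ v : V, insert v (G.neighborSet v) ⊆ closedNbhd G S → v ∈ S

/-- `n_D(G)`: the number of digitally convex sets of `G`. -/
noncomputable def nD {V : Type*} (G : SimpleGraph V) : ℕ :=
  Nat.card {S : Set V // DigConvex G S}

/-!
In `K_α □ K_β` the closed neighbourhood of `(a, b)` is the cross formed by row `a` and column `b`,
so `N[S]` is the union of the rows through `π₁ S` and the columns through `π₂ S`. Every `v` in the
rectangle `π₁ S × π₂ S` has `N[v] ⊆ N[S]`, so a convex set is that rectangle, and it is everything
as soon as `π₁ S` or `π₂ S` is. Conversely a rectangle `A × B` with `A`, `B` proper is convex: if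
`v.1 ∉ A`, then `(v.1, y)` with `y ∉ B` lies in `N[v]` but not in `N[A × B]`. So the convex sets
are `∅`, everything, and the rectangles with nonempty proper sides.
-/

open Set

section General

variable {V : Type*} (G : SimpleGraph V)

lemma digConvex_empty : DigConvex G ∅ := fun v hv => by
  simpa [closedNbhd] using hv (mem_insert v _)

lemma digConvex_univ : DigConvex G univ := fun v _ => mem_univ v

variable {G} in
lemma DigConvex.eq_univ_of_closedNbhd_eq_univ {S : Set V} (hS : DigConvex G S)
    (h : closedNbhd G S = univ) : S = univ :=
  eq_univ_of_forall fun v => hS v (h ▸ subset_univ _)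

end General

section CompleteBoxProd

variable {α β : Type*}

lemma insert_neighborSet_top_boxProd (v : α × β) :
    insert v ((⊤ □ ⊤ : SimpleGraph (α × β)).neighborSet v) = {w | w.1 = v.1 ∨ w.2 = v.2} := by
  ext ⟨x, y⟩
  obtain ⟨a, b⟩ := v
  simp only [mem_insert_iff, mem_neighborSet, boxProd_adj, top_adj, mem_ofPred_eq, Prod.mk.injEq]
  by_cases hx : x = a <;> by_cases hy : y = b <;> simp [hx, hy, eq_comm]

lemma closedNbhd_top_boxProd (S : Set (α × β)) :
    closedNbhd (⊤ □ ⊤) S = Prod.fst ⁻¹' (Prod.fst '' S) ∪ Prod.snd ⁻¹' (Prod.snd '' S) := by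
  ext w
  simp only [closedNbhd, insert_neighborSet_top_boxProd, mem_iUnion, mem_ofPred_eq, mem_union,
    mem_preimage, mem_image, exists_prop]
  constructor
  · rintro ⟨v, hv, h | h⟩
    exacts [Or.inl ⟨v, hv, h.symm⟩, Or.inr ⟨v, hv, h.symm⟩]
  · rintro (⟨v, hv, h⟩ | ⟨v, hv, h⟩)
    exacts [⟨v, hv, Or.inl h.symm⟩, ⟨v, hv, Or.inr h.symm⟩]

lemma digConvex_top_boxProd_prod {A : Set α} {B : Set β} (hA : A ≠ univ) (hB : B ≠ univ) :
    DigConvex (⊤ □ ⊤) (A ×ˢ B) := by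
  intro v hv
  have hcover : ∀ w : α × β, (w.1 = v.1 ∨ w.2 = v.2) → w.1 ∈ A ∨ w.2 ∈ B := fun w hw => by
    have hw := hv (by rwa [insert_neighborSet_top_boxProd])
    rw [closedNbhd_top_boxProd] at hw
    exact hw.imp (fst_image_prod_subset A B ·) (snd_image_prod_subset A B ·)
  obtain ⟨x, hx⟩ := nonempty_compl.mpr hA
  obtain ⟨y, hy⟩ := nonempty_compl.mpr hB
  exact ⟨(hcover (v.1, y) (Or.inl rfl)).resolve_right hy,
    (hcover (x, v.2) (Or.inr rfl)).resolve_left hx⟩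

lemma DigConvex.eq_prod_image_of_top_boxProd {S : Set (α × β)} (hS : DigConvex (⊤ □ ⊤) S) :
    S = (Prod.fst '' S) ×ˢ (Prod.snd '' S) := by
  refine subset_fst_image_prod_snd_image.antisymm fun v ⟨hv₁, hv₂⟩ => hS v ?_
  rw [insert_neighborSet_top_boxProd, closedNbhd_top_boxProd]
  rintro w (h | h)
  exacts [Or.inl (mem_preimage.mpr (h ▸ hv₁)), Or.inr (mem_preimage.mpr (h ▸ hv₂))]

def properNonempty (α : Type*) : Set (Set α) := {A | A.Nonempty ∧ A ≠ univ}

def properRectangles (α β : Type*) : Set (Set (α × β)) :=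
  (fun p => p.1 ×ˢ p.2) '' (properNonempty α ×ˢ properNonempty β)

lemma setOf_digConvex_top_boxProd :
    {S | DigConvex (⊤ □ ⊤ : SimpleGraph (α × β)) S} =
      insert ∅ (insert univ (properRectangles α β)) := by
  ext S
  simp only [mem_ofPred_eq, mem_insert_iff]
  constructor
  · intro hS
    obtain rfl | hne := S.eq_empty_or_nonempty
    · exact Or.inl rfl
    by_cases hA : Prod.fst '' S = univ
    · exact Or.inr <| Or.inl <| hS.eq_univ_of_closedNbhd_eq_univ <| by
        simp [closedNbhd_top_boxProd, hA]
    by_cases hB : Prod.snd '' S = univ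
    · exact Or.inr <| Or.inl <| hS.eq_univ_of_closedNbhd_eq_univ <| by
        simp [closedNbhd_top_boxProd, hB]
    exact Or.inr <| Or.inr
      ⟨(_, _), ⟨⟨hne.image _, hA⟩, ⟨hne.image _, hB⟩⟩, hS.eq_prod_image_of_top_boxProd.symm⟩
  · rintro (rfl | rfl | ⟨⟨A, B⟩, ⟨⟨-, hA⟩, ⟨-, hB⟩⟩, rfl⟩)
    exacts [digConvex_empty _, digConvex_univ _, digConvex_top_boxProd_prod hA hB]

lemma empty_notMem_properRectangles : ∅ ∉ properRectangles α β := by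
  rintro ⟨p, hp, hpempty⟩
  exact (hp.1.1.prod hp.2.1).ne_empty hpempty

lemma univ_notMem_properRectangles [Nonempty α] [Nonempty β] : univ ∉ properRectangles α β := by
  rintro ⟨p, hp, hpuniv⟩
  exact hp.1.2 (prod_eq_univ.mp hpuniv).1

lemma ncard_properNonempty [Fintype α] [Nonempty α] :
    (properNonempty α).ncard = 2 ^ Fintype.card α - 2 := by
  have : properNonempty α = {∅, univ}ᶜ := by
    ext A
    simp [properNonempty, nonempty_iff_ne_empty]
  rw [this, ncard_compl, ncard_pair empty_ne_univ, Nat.card_eq_fintype_card, Fintype.card_set]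

lemma ncard_properRectangles [Fintype α] [Fintype β] [Nonempty α] [Nonempty β] :
    (properRectangles α β).ncard = (2 ^ Fintype.card α - 2) * (2 ^ Fintype.card β - 2) := by
  have hinj : InjOn (fun p : Set α × Set β => p.1 ×ˢ p.2) (properNonempty α ×ˢ properNonempty β) :=
    fun p hp _ _ hpq =>
      Prod.ext_iff.mpr <| (prod_eq_prod_iff_of_nonempty (hp.1.1.prod hp.2.1)).mp hpq
  rw [properRectangles, hinj.ncard_image, ncard_prod, ncard_properNonempty, ncard_properNonempty]

lemma nD_top_boxProd [Fintype α] [Fintype β] [Nonempty α] [Nonempty β] :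
    nD (⊤ □ ⊤ : SimpleGraph (α × β)) =
      2 + (2 ^ Fintype.card α - 2) * (2 ^ Fintype.card β - 2) := by
  change Nat.card {S | DigConvex (⊤ □ ⊤ : SimpleGraph (α × β)) S} = _
  rw [Nat.card_coe_set_eq, setOf_digConvex_top_boxProd,
    ncard_insert_of_notMem (by simp [empty_ne_univ, empty_notMem_properRectangles]),
    ncard_insert_of_notMem univ_notMem_properRectangles, ncard_properRectangles]
  ring

end CompleteBoxProd

theorem nD_complete_boxProd (n m : ℕ) (hn : 1 ≤ n) (hm : 1 ≤ m) :
    nD ((⊤ : SimpleGraph (Fin n)) □ (⊤ : SimpleGraph (Fin m))) =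
      2 + (2 ^ n - 2) * (2 ^ m - 2) := by
  have : Nonempty (Fin n) := Fin.pos_iff_nonempty.mp hn
  have : Nonempty (Fin m) := Fin.pos_iff_nonempty.mp hm
  simpa using nD_top_boxProd (α := Fin n) (β := Fin m)
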